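/- The maximum over all real Euler angles (α₁,β₁,γ₁,α₂,β₂,γ₂) ∈ ℝ⁶ of the measurement-assisted transition probability P_{1→2}^{(2)}(U(α₁,β₁,γ₁), U(α₂,β₂,γ₂)) equals 1/2; i.e., when the intermediate measurement is of the population of state |2⟩, the maximal transition probability from |1⟩ to |2⟩ is 1/2 (the same as with no measurement at all). -/

import Mathlib

/-!
The intermediate measurement replaces `ρ = ψψ†` (with `ψ` the first column of `U₁`) by
`(Pψ)(Pψ)† + ((1-P)ψ)((1-P)ψ)†`, so the amplitude of the path through `|j⟩` no longer
interferes with that of the other paths and `P_{1→k}^{(j)} = |U₂[k,j] U₁[j,1]|² +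
|(U₂U₁)[k,1] - U₂[k,j] U₁[j,1]|²`. For `j = k = |2⟩` and Wigner matrices, the first term is
`cos²β₂ sin²β₁ / 2 ≤ cos²β₂ / 2`. In the second, `|U₂[2,1]| = |U₂[2,3]| = |sin β₂|/√2` and
`|U₁[1,1]| + |U₁[3,1]| = cos²(β₁/2) + sin²(β₁/2) = 1`, so by the triangle inequality it is at most
`sin²β₂ / 2`. Hence the probability is at most `1/2`, with equality at `β₁ = π/2`, `β₂ = 0`.
-/

open Matrix

/-- Measurement-assisted transition probability `P_{1→k}^{(j)}`:
indices are 0-based, so state `|1⟩` is index `0`, state `|2⟩` is index `1`,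
state `|3⟩` is index `2`.  Here `ρ = U₁|1⟩⟨1|U₁†`, `P = |j⟩⟨j|`, and the value is
`⟨k| U₂ (P ρ P + (I−P) ρ (I−P)) U₂† |k⟩` (a real number). -/
noncomputable def measProb (j k : Fin 3) (U₁ U₂ : Matrix (Fin 3) (Fin 3) ℂ) : ℝ :=
  let ρ : Matrix (Fin 3) (Fin 3) ℂ := U₁ * Matrix.single 0 0 1 * U₁ᴴ
  let P : Matrix (Fin 3) (Fin 3) ℂ := Matrix.single j j 1
  ((U₂ * (P * ρ * P + (1 - P) * ρ * (1 - P)) * U₂ᴴ) k k).re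

/-- The Wigner matrix `U(α,β,γ)` of the spin-1 `ZYZ` Euler parameterization. -/
noncomputable def Umat (α β γ : ℝ) : Matrix (Fin 3) (Fin 3) ℂ :=
  !![Complex.exp (-Complex.I * (↑α + ↑γ)) * (Real.cos (β/2) : ℂ)^2,
       -(Complex.exp (-Complex.I * ↑α) / (Real.sqrt 2 : ℂ)) * (Real.sin β : ℂ),
       Complex.exp (-Complex.I * (↑α - ↑γ)) * (Real.sin (β/2) : ℂ)^2;
     (Complex.exp (-Complex.I * ↑γ) / (Real.sqrt 2 : ℂ)) * (Real.sin β : ℂ),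
       (Real.cos β : ℂ),
       -(Complex.exp (Complex.I * ↑γ) / (Real.sqrt 2 : ℂ)) * (Real.sin β : ℂ);
     Complex.exp (Complex.I * (↑α - ↑γ)) * (Real.sin (β/2) : ℂ)^2,
       (Complex.exp (Complex.I * ↑α) / (Real.sqrt 2 : ℂ)) * (Real.sin β : ℂ),
       Complex.exp (Complex.I * (↑α + ↑γ)) * (Real.cos (β/2) : ℂ)^2]

section
variable {m n R : Type*} [Fintype n] [NonUnitalSemiring R] [StarRing R]

lemma mul_vecMulVec_star_mul_conjTranspose (A : Matrix m n R) (v : n → R) :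
    A * vecMulVec v (star v) * Aᴴ = vecMulVec (A *ᵥ v) (star (A *ᵥ v)) := by
  rw [mul_vecMulVec, vecMulVec_mul, star_mulVec]

lemma Matrix.IsHermitian.mul_vecMulVec_star_mul {Q : Matrix n n R} (hQ : Q.IsHermitian)
    (v : n → R) : Q * vecMulVec v (star v) * Q = vecMulVec (Q *ᵥ v) (star (Q *ᵥ v)) := by
  simpa only [hQ.eq] using mul_vecMulVec_star_mul_conjTranspose Q v

end

lemma re_vecMulVec_star_apply_self {n : Type*} (w : n → ℂ) (k : n) :
    (vecMulVec w (star w) k k).re = ‖w k‖ ^ 2 := by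
  rw [vecMulVec_apply, Pi.star_apply, Complex.star_def, Complex.mul_conj,
    Complex.normSq_eq_norm_sq, Complex.ofReal_re]

lemma measProb_eq (j k : Fin 3) (U₁ U₂ : Matrix (Fin 3) (Fin 3) ℂ) :
    measProb j k U₁ U₂
      = ‖U₂ k j * U₁ j 0‖ ^ 2 + ‖(U₂ * U₁) k 0 - U₂ k j * U₁ j 0‖ ^ 2 := by
  set P : Matrix (Fin 3) (Fin 3) ℂ := Matrix.single j j 1
  have hρ : U₁ * Matrix.single 0 0 1 * U₁ᴴ = vecMulVec (U₁.col 0) (star (U₁.col 0)) := by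
    rw [← mulVec_single_one, ← mul_vecMulVec_star_mul_conjTranspose, Pi.star_single, star_one,
      single_eq_single_vecMulVec_single]
  have hP : P.IsHermitian := by simp [P, IsHermitian]
  have hP_col : (U₂ *ᵥ (P *ᵥ U₁.col 0)) k = U₂ k j * U₁ j 0 := by
    rw [single_mulVec, one_mul, col_apply, ← Pi.single, mulVec_single]
    simp
  have hQ_col : (U₂ *ᵥ ((1 - P) *ᵥ U₁.col 0)) k = (U₂ * U₁) k 0 - U₂ k j * U₁ j 0 := by
    rw [sub_mulVec, one_mulVec, mulVec_sub, Pi.sub_apply, hP_col, ← mulVec_single_one,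
      mulVec_mulVec, mulVec_single_one, col_apply]
  simp only [measProb]
  rw [hρ, hP.mul_vecMulVec_star_mul, (isHermitian_one.sub hP).mul_vecMulVec_star_mul,
    Matrix.mul_add, Matrix.add_mul, mul_vecMulVec_star_mul_conjTranspose,
    mul_vecMulVec_star_mul_conjTranspose, Matrix.add_apply, Complex.add_re,
    re_vecMulVec_star_apply_self, re_vecMulVec_star_apply_self, hP_col, hQ_col]

lemma measProb_one_one (U₁ U₂ : Matrix (Fin 3) (Fin 3) ℂ) :
    measProb 1 1 U₁ U₂
      = ‖U₂ 1 1 * U₁ 1 0‖ ^ 2 + ‖U₂ 1 0 * U₁ 0 0 + U₂ 1 2 * U₁ 2 0‖ ^ 2 := by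
  rw [measProb_eq, mul_apply, Fin.sum_univ_three]
  ring_nf

section
variable (α β γ : ℝ)

lemma norm_Umat_zero_zero : ‖Umat α β γ 0 0‖ = Real.cos (β / 2) ^ 2 := by
  simp [Umat, Complex.norm_exp, -Complex.ofReal_cos, -Complex.ofReal_sin, div_eq_inv_mul]

lemma norm_Umat_two_zero : ‖Umat α β γ 2 0‖ = Real.sin (β / 2) ^ 2 := by
  simp [Umat, Complex.norm_exp, -Complex.ofReal_cos, -Complex.ofReal_sin, div_eq_inv_mul]

lemma norm_Umat_one_zero : ‖Umat α β γ 1 0‖ = |Real.sin β| / √2 := by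
  simp [Umat, Complex.norm_exp, -Complex.ofReal_cos, -Complex.ofReal_sin, div_eq_inv_mul]

lemma norm_Umat_one_one : ‖Umat α β γ 1 1‖ = |Real.cos β| := by
  simp [Umat, -Complex.ofReal_cos, -Complex.ofReal_sin]

lemma norm_Umat_one_two : ‖Umat α β γ 1 2‖ = |Real.sin β| / √2 := by
  simp [Umat, Complex.norm_exp, -Complex.ofReal_cos, -Complex.ofReal_sin, div_eq_inv_mul]

end

lemma norm_Umat_interference_le (α₁ β₁ γ₁ α₂ β₂ γ₂ : ℝ) :
    ‖Umat α₂ β₂ γ₂ 1 0 * Umat α₁ β₁ γ₁ 0 0 + Umat α₂ β₂ γ₂ 1 2 * Umat α₁ β₁ γ₁ 2 0‖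
      ≤ |Real.sin β₂| / √2 :=
  calc _ ≤ ‖Umat α₂ β₂ γ₂ 1 0 * Umat α₁ β₁ γ₁ 0 0‖ + ‖Umat α₂ β₂ γ₂ 1 2 * Umat α₁ β₁ γ₁ 2 0‖ :=
        norm_add_le _ _
    _ = |Real.sin β₂| / √2 * (Real.cos (β₁ / 2) ^ 2 + Real.sin (β₁ / 2) ^ 2) := by
        rw [norm_mul, norm_mul, norm_Umat_one_zero, norm_Umat_zero_zero, norm_Umat_one_two,
          norm_Umat_two_zero]
        ring
    _ = |Real.sin β₂| / √2 := by rw [Real.cos_sq_add_sin_sq, mul_one]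

lemma measProb_Umat_le (α₁ β₁ γ₁ α₂ β₂ γ₂ : ℝ) :
    measProb 1 1 (Umat α₁ β₁ γ₁) (Umat α₂ β₂ γ₂) ≤ 1 / 2 := by
  have hI := pow_le_pow_left₀ (norm_nonneg _) (norm_Umat_interference_le α₁ β₁ γ₁ α₂ β₂ γ₂) 2
  rw [div_pow, sq_abs, Real.sq_sqrt zero_le_two] at hI
  rw [measProb_one_one, norm_mul, norm_Umat_one_one, norm_Umat_one_zero, mul_pow, div_pow,
    sq_abs, sq_abs, Real.sq_sqrt zero_le_two]
  nlinarith [Real.sin_sq_add_cos_sq β₂, Real.sin_sq_le_one β₁, sq_nonneg (Real.cos β₂)]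

lemma measProb_Umat_eq_half : measProb 1 1 (Umat 0 (Real.pi / 2) 0) (Umat 0 0 0) = 1 / 2 := by
  rw [measProb_one_one]
  simp [Umat, -Complex.ofReal_cos, -Complex.ofReal_sin]

/-- the maximum over all real Euler angles of the
measurement-assisted transition probability
`P_{1→2}^{(2)}(U(α₁,β₁,γ₁), U(α₂,β₂,γ₂))` (intermediate measurement of the
population of state `|2⟩`) equals `1/2`.
(0-based indices: `j = 1` is `|2⟩`, `k = 1` is `|2⟩`.) -/
theorem stmt19 :
    IsGreatest
      {x : ℝ | ∃ α₁ β₁ γ₁ α₂ β₂ γ₂ : ℝ,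
        x = measProb 1 1 (Umat α₁ β₁ γ₁) (Umat α₂ β₂ γ₂)}
      (1/2) := by
  refine ⟨⟨0, Real.pi / 2, 0, 0, 0, 0, measProb_Umat_eq_half.symm⟩, ?_⟩
  rintro x ⟨α₁, β₁, γ₁, α₂, β₂, γ₂, rfl⟩
  exact measProb_Umat_le α₁ β₁ γ₁ α₂ β₂ γ₂
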